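/- arXiv:2407.04546 — 2 statements merged into one kernel-verified Lean document; each statement's English description precedes it below -/
import Mathlib

section
/- Let u ∈ C²(cl Ω) solve −Δu = f(u) in Ω = ω × ℝ with u = 0 on ∂ω × ℝ, and assume ∂u/∂x_N > 0 everywhere in Ω. Then u is stable: for every smooth compactly supported function χ : Ω → ℝ, ∫_Ω ( |∇χ(x)|² − f'(u(x)) χ(x)² ) dx ≥ 0. -/
open MeasureTheory

/-- Partial derivative of `g : ℝ^m → ℝ` in the `i`-th coordinate direction. -/
noncomputable def pd {m : ℕ} (g : (Fin m → ℝ) → ℝ) (i : Fin m) (x : Fin m → ℝ) : ℝ :=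
  fderiv ℝ g x (Pi.single i 1)

/-- Laplacian of `g : ℝ^m → ℝ`. -/
noncomputable def lap {m : ℕ} (g : (Fin m → ℝ) → ℝ) (x : Fin m → ℝ) : ℝ :=
  ∑ i, fderiv ℝ (pd g i) x (Pi.single i 1)

/-- Partial derivative of `u : ℝ^m × ℝ → ℝ` in the `i`-th horizontal direction. -/
noncomputable def pdX {m : ℕ} (u : (Fin m → ℝ) × ℝ → ℝ) (i : Fin m)
    (p : (Fin m → ℝ) × ℝ) : ℝ :=
  fderiv ℝ u p (Pi.single i 1, 0)

/-- Partial derivative of `u : ℝ^m × ℝ → ℝ` in the last (vertical) direction. -/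
noncomputable def pdT {m : ℕ} (u : (Fin m → ℝ) × ℝ → ℝ) (p : (Fin m → ℝ) × ℝ) : ℝ :=
  fderiv ℝ u p (0, 1)

/-- Laplacian of `u : ℝ^m × ℝ → ℝ`. -/
noncomputable def lapC {m : ℕ} (u : (Fin m → ℝ) × ℝ → ℝ) (p : (Fin m → ℝ) × ℝ) : ℝ :=
  (∑ i, fderiv ℝ (pdX u i) p (Pi.single i 1, 0)) + fderiv ℝ (pdT u) p (0, 1)

/-- Primitive `F(t) = ∫₀ᵗ f(s) ds`. -/
noncomputable def primF (f : ℝ → ℝ) (t : ℝ) : ℝ := ∫ s in (0:ℝ)..t, f s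

/-- The action functional `I(v) = ∫_ω (½|∇v|² − F(v))`. -/
noncomputable def action {m : ℕ} (f : ℝ → ℝ) (ω : Set (Fin m → ℝ))
    (v : (Fin m → ℝ) → ℝ) : ℝ :=
  ∫ x in ω, ((1/2) * (∑ i, (pd v i x)^2) - primF f (v x))

/-- A set has smooth boundary if it is the strict sublevel set of a smooth defining function
whose gradient does not vanish on the boundary. -/
def HasSmoothBoundary {m : ℕ} (ω : Set (Fin m → ℝ)) : Prop :=
  ∃ ρ : (Fin m → ℝ) → ℝ, ContDiff ℝ (⊤ : ℕ∞) ρ ∧ ω = {x | ρ x < 0} ∧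
    frontier ω = {x | ρ x = 0} ∧ ∀ x ∈ frontier ω, fderiv ℝ ρ x ≠ 0

/-- Hypothesis (H1'): `f(0) = 0`, the action is nonnegative on Lipschitz functions vanishing
outside `ω`, and `0` is an isolated minimizer. -/
def H1' {m : ℕ} (f : ℝ → ℝ) (ω : Set (Fin m → ℝ)) : Prop :=
  f 0 = 0 ∧
  (∀ v : (Fin m → ℝ) → ℝ, (∃ K, LipschitzWith K v) → (∀ x ∉ ω, v x = 0) →
    0 ≤ action f ω v) ∧
  (∃ ε > (0:ℝ), ∀ v : (Fin m → ℝ) → ℝ, (∃ K, LipschitzWith K v) → (∀ x ∉ ω, v x = 0) →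
    0 < (∫ x in ω, ((∑ i, (pd v i x)^2) + (v x)^2)) →
    (∫ x in ω, ((∑ i, (pd v i x)^2) + (v x)^2)) ≤ ε → 0 < action f ω v)

/-- Hypothesis (H2'): there is a positive `C²` solution of `-Δψ = f(ψ)`, vanishing on `∂ω`,
with zero action. -/
def H2' {m : ℕ} (f : ℝ → ℝ) (ω : Set (Fin m → ℝ)) : Prop :=
  ∃ ψ : (Fin m → ℝ) → ℝ, ContDiffOn ℝ 2 ψ (closure ω) ∧ (∀ x ∈ ω, 0 < ψ x) ∧
    (∀ x ∈ frontier ω, ψ x = 0) ∧ (∀ x ∈ ω, -lap ψ x = f (ψ x)) ∧ action f ω ψ = 0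

/-- The Hamiltonian `H(t)` associated to `u` on the cylinder over `ω`. -/
noncomputable def Ham {m : ℕ} (f : ℝ → ℝ) (ω : Set (Fin m → ℝ))
    (u : (Fin m → ℝ) × ℝ → ℝ) (t : ℝ) : ℝ :=
  ∫ x' in ω, ((1/2) * ((∑ i, (pdX u i (x', t))^2) - (pdT u (x', t))^2) - primF f (u (x', t)))

lemma integral_fderiv_apply_eq_zero {m : ℕ} (g : (Fin m → ℝ) × ℝ → ℝ)
    (hg : ContDiff ℝ 1 g) (hs : HasCompactSupport g) (v : (Fin m → ℝ) × ℝ) :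
    ∫ p, fderiv ℝ g p v = 0 := by
  have hgc : Continuous g := hg.continuous
  have hdg : Continuous (fderiv ℝ g) := hg.continuous_fderiv one_ne_zero
  obtain ⟨C, hC⟩ : ∃ C, ∀ p, ‖fderiv ℝ g p‖ ≤ C :=
    (hs.fderiv ℝ).exists_bound_of_continuous hdg
  have hC0 : 0 ≤ C := le_trans (norm_nonneg _) (hC 0)
  set T : Set ((Fin m → ℝ) × ℝ) :=
    (fun x : ((Fin m → ℝ) × ℝ) × ℝ => x.1 - x.2 • v) '' (tsupport g ×ˢ Set.Icc (-1) 1) with hT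
  have hTc : IsCompact T := (hs.prod isCompact_Icc).image (by fun_prop)
  have key := hasDerivAt_integral_of_dominated_loc_of_deriv_le (μ := volume)
    (F := fun s p => g (p + s • v)) (F' := fun s p => fderiv ℝ g (p + s • v) v)
    (x₀ := (0:ℝ)) (bound := T.indicator fun _ => C * ‖v‖) (s := Metric.ball 0 1) (Metric.ball_mem_nhds 0 one_pos)
    (Filter.Eventually.of_forall fun s =>
      (hgc.comp (by fun_prop)).aestronglyMeasurable)
    (by
      simpa using (hgc.integrable_of_hasCompactSupport hs))
    (Continuous.aestronglyMeasurable (by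
      exact ((hdg.comp (by fun_prop)).clm_apply continuous_const)))
    (Filter.Eventually.of_forall fun p => by
      intro s hsb
      by_cases hmem : p + s • v ∈ tsupport g
      · have : p ∈ T := by
          refine ⟨(p + s • v, s), ⟨hmem, ?_⟩, by simp⟩
          have := Metric.mem_ball.1 hsb
          simp only [dist_zero_right, Real.norm_eq_abs] at this
          exact ⟨by linarith [abs_le.1 this.le |>.1], by linarith [abs_le.1 this.le |>.2]⟩
        rw [Set.indicator_of_mem this]
        calc ‖fderiv ℝ g (p + s • v) v‖ ≤ ‖fderiv ℝ g (p + s • v)‖ * ‖v‖ :=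
              (fderiv ℝ g (p + s • v)).le_opNorm v
          _ ≤ C * ‖v‖ := by gcongr; exact hC _
      · have : fderiv ℝ g (p + s • v) = 0 := by
          by_contra h
          exact hmem (support_fderiv_subset ℝ h)
        simp only [this, ContinuousLinearMap.zero_apply, norm_zero]
        exact Set.indicator_nonneg (fun _ _ => by positivity) _)
    ((integrable_indicator_iff hTc.isClosed.measurableSet).2
      (integrableOn_const hTc.measure_lt_top.ne))
    (Filter.Eventually.of_forall fun p => by
      intro s hsb
      have hcurve : HasDerivAt (fun s : ℝ => p + s • v) v s := by
        simpa using ((hasDerivAt_id s).smul_const v).const_add p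
      exact (((hg.differentiable one_ne_zero) (p + s • v)).hasFDerivAt.comp_hasDerivAt s hcurve))
  have hconst : (fun s : ℝ => ∫ p, g (p + s • v)) = fun _ => ∫ p, g p := by
    funext s
    rw [Measure.volume_eq_prod]
    exact integral_add_right_eq_self g (s • v)
  have h0 : HasDerivAt (fun s : ℝ => ∫ p, g (p + s • v)) 0 0 := by
    rw [hconst]; exact hasDerivAt_const _ _
  have := key.2.unique h0
  simpa using this

namespace MonSt
variable {m : ℕ}

noncomputable def phh (u : (Fin m → ℝ) × ℝ → ℝ) (h : ℝ) (p : (Fin m → ℝ) × ℝ) : ℝ :=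
  (u (p.1, p.2 + h) - u p) / h

noncomputable def slp (f : ℝ → ℝ) (u : (Fin m → ℝ) × ℝ → ℝ) (h : ℝ)
    (p : (Fin m → ℝ) × ℝ) : ℝ :=
  (f (u (p.1, p.2 + h)) - f (u p)) / (u (p.1, p.2 + h) - u p)

noncomputable def Vv (χ u : (Fin m → ℝ) × ℝ → ℝ) (h : ℝ) (v p : (Fin m → ℝ) × ℝ) : ℝ :=
  χ p * χ p * (phh u h p)⁻¹ * fderiv ℝ (phh u h) p v

section facts
variable {ω : Set (Fin m → ℝ)} (hωo : IsOpen ω)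
  {u : (Fin m → ℝ) × ℝ → ℝ}
  (huC : ContDiffOn ℝ 2 u (closure ω ×ˢ (Set.univ : Set ℝ)))

include hωo huC in
theorem hu2 (p : (Fin m → ℝ) × ℝ) (hp : p.1 ∈ ω) : ContDiffAt ℝ 2 u p := by
  refine huC.contDiffAt ?_
  refine Filter.mem_of_superset ((hωo.prod isOpen_univ).mem_nhds ⟨hp, trivial⟩) ?_
  exact Set.prod_mono subset_closure le_rfl

include hωo huC in
theorem humono (hmono : ∀ x' ∈ ω, ∀ t : ℝ, 0 < fderiv ℝ u (x', t) (0, 1))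
    (x' : Fin m → ℝ) (hx' : x' ∈ ω) : StrictMono (fun t => u (x', t)) := by
  have hder : ∀ t : ℝ, HasDerivAt (fun s => u (x', s)) (fderiv ℝ u (x', t) (0, 1)) t := by
    intro t
    exact (((hu2 hωo huC (x', t) hx').differentiableAt
      (by norm_num)).hasFDerivAt).comp_hasDerivAt t
      ((hasDerivAt_const t x').prodMk (hasDerivAt_id t))
  exact strictMono_of_deriv_pos fun t => by
    rw [(hder t).deriv]; exact hmono x' hx' t

theorem hshift {h : ℝ} (q : (Fin m → ℝ) × ℝ) :
    (q.1, q.2 + h) = q + ((0 : Fin m → ℝ), h) := by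
  simp [Prod.ext_iff]

theorem htransl {g : (Fin m → ℝ) × ℝ → ℝ} {c p : (Fin m → ℝ) × ℝ}
    (hg : DifferentiableAt ℝ g (p + c)) :
    HasFDerivAt (fun q => g (q + c)) (fderiv ℝ g (p + c)) p :=
  hg.hasFDerivAt.comp p ((hasFDerivAt_id p).add_const c)

theorem hphh_eq (u : (Fin m → ℝ) × ℝ → ℝ) (h : ℝ) :
    phh u h = fun q => h⁻¹ • (u (q + ((0 : Fin m → ℝ), h)) - u q) := by
  funext q
  rw [phh, hshift, smul_eq_mul, inv_mul_eq_div]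

include hωo huC in
theorem hphh2 (h : ℝ) (p : (Fin m → ℝ) × ℝ) (hp : p.1 ∈ ω) :
    ContDiffAt ℝ 2 (phh u h) p := by
  rw [hphh_eq]
  have h1 : ContDiffAt ℝ 2 (fun q : (Fin m → ℝ) × ℝ => u (q + ((0 : Fin m → ℝ), h))) p := by
    refine ContDiffAt.comp p (hu2 hωo huC _ ?_) ((contDiff_id.add contDiff_const).contDiffAt)
    simpa using hp
  exact (h1.sub (hu2 hωo huC p hp)).const_smul _

include hωo huC in
theorem hphh_pos (hmono : ∀ x' ∈ ω, ∀ t : ℝ, 0 < fderiv ℝ u (x', t) (0, 1))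
    {h : ℝ} (hh : 0 < h) (p : (Fin m → ℝ) × ℝ) (hp : p.1 ∈ ω) : 0 < phh u h p := by
  have := humono hωo huC hmono p.1 hp (show p.2 < p.2 + h by linarith)
  rw [phh]
  have : u (p.1, p.2) < u (p.1, p.2 + h) := this
  simp only [Prod.mk.eta] at this
  exact div_pos (by linarith) hh

include hωo huC in
theorem hDu_diff (v : (Fin m → ℝ) × ℝ) (q : (Fin m → ℝ) × ℝ) (hq : q.1 ∈ ω) :
    DifferentiableAt ℝ (fun q' => fderiv ℝ u q' v) q := by
  have h1 : ContDiffAt ℝ 1 (fderiv ℝ u) q :=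
    (hu2 hωo huC q hq).fderiv_right (by norm_num)
  exact (h1.clm_apply contDiffAt_const).differentiableAt one_ne_zero

include hωo huC in
theorem hphh_fderiv_eqOn (h : ℝ) (v : (Fin m → ℝ) × ℝ) :
    Set.EqOn (fun q => fderiv ℝ (phh u h) q v)
      (fun q => h⁻¹ • (fderiv ℝ u (q + ((0 : Fin m → ℝ), h)) v - fderiv ℝ u q v))
      (ω ×ˢ (Set.univ : Set ℝ)) := by
  intro q hq
  have hq1 : q.1 ∈ ω := hq.1
  have hq1' : (q + ((0 : Fin m → ℝ), h)).1 ∈ ω := by simpa using hq1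
  have hder : HasFDerivAt (phh u h)
      (h⁻¹ • (fderiv ℝ u (q + ((0 : Fin m → ℝ), h)) - fderiv ℝ u q)) q := by
    rw [hphh_eq]
    exact ((htransl ((hu2 hωo huC _ hq1').differentiableAt (by norm_num))).sub
      ((hu2 hωo huC q hq1).differentiableAt (by norm_num)).hasFDerivAt).const_smul h⁻¹
  simp [hder.fderiv]

include hωo huC in
theorem hsecond_dir (h : ℝ) (v : (Fin m → ℝ) × ℝ) (p : (Fin m → ℝ) × ℝ) (hp : p.1 ∈ ω) :
    fderiv ℝ (fun q => fderiv ℝ (phh u h) q v) p v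
      = h⁻¹ * (fderiv ℝ (fun q => fderiv ℝ u q v) (p + ((0 : Fin m → ℝ), h)) v
          - fderiv ℝ (fun q => fderiv ℝ u q v) p v) := by
  have hp' : (p + ((0 : Fin m → ℝ), h)).1 ∈ ω := by simpa using hp
  have hev : (fun q => fderiv ℝ (phh u h) q v)
      =ᶠ[nhds p] (fun q => h⁻¹ • (fderiv ℝ u (q + ((0 : Fin m → ℝ), h)) v - fderiv ℝ u q v)) :=
    Filter.eventuallyEq_of_mem ((hωo.prod isOpen_univ).mem_nhds ⟨hp, trivial⟩)
      (hphh_fderiv_eqOn hωo huC h v)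
  rw [hev.fderiv_eq]
  have h2 : HasFDerivAt
      (fun q => h⁻¹ • (fderiv ℝ u (q + ((0 : Fin m → ℝ), h)) v - fderiv ℝ u q v))
      (h⁻¹ • (fderiv ℝ (fun q' => fderiv ℝ u q' v) (p + ((0 : Fin m → ℝ), h))
        - fderiv ℝ (fun q' => fderiv ℝ u q' v) p)) p :=
    ((htransl (hDu_diff hωo huC v _ hp')).sub
      (hDu_diff hωo huC v p hp).hasFDerivAt).const_smul h⁻¹
  rw [h2.fderiv]; simp [smul_eq_mul]

theorem Vv_def (χ u : (Fin m → ℝ) × ℝ → ℝ) (h : ℝ) (v : (Fin m → ℝ) × ℝ) :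
    Vv χ u h v = fun p => χ p * χ p * (phh u h p)⁻¹ * fderiv ℝ (phh u h) p v := rfl

include hωo huC in
theorem hba (hmono : ∀ x' ∈ ω, ∀ t : ℝ, 0 < fderiv ℝ u (x', t) (0, 1))
    {h : ℝ} (hh : 0 < h) (p : (Fin m → ℝ) × ℝ) (hp : p.1 ∈ ω) :
    u p < u (p.1, p.2 + h) := by
  have := humono hωo huC hmono p.1 hp (show p.2 < p.2 + h by linarith)
  simpa using this

include hωo huC in
theorem hsum (f : ℝ → ℝ)
    (heq : ∀ x' ∈ ω, ∀ t : ℝ, -lapC u (x', t) = f (u (x', t)))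
    (hmono : ∀ x' ∈ ω, ∀ t : ℝ, 0 < fderiv ℝ u (x', t) (0, 1))
    {h : ℝ} (hh : 0 < h) (p : (Fin m → ℝ) × ℝ) (hp : p.1 ∈ ω) :
    (∑ i, fderiv ℝ (fun q => fderiv ℝ (phh u h) q (Pi.single i 1, 0)) p (Pi.single i 1, 0))
      + fderiv ℝ (fun q => fderiv ℝ (phh u h) q ((0 : Fin m → ℝ), 1)) p ((0 : Fin m → ℝ), 1)
    = -(slp f u h p * phh u h p) := by
  have e1 : ∀ i : Fin m,
      fderiv ℝ (fun q => fderiv ℝ (phh u h) q (Pi.single i 1, 0)) p (Pi.single i 1, 0)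
        = h⁻¹ * (fderiv ℝ (pdX u i) (p + ((0 : Fin m → ℝ), h)) (Pi.single i 1, 0)
            - fderiv ℝ (pdX u i) p (Pi.single i 1, 0)) :=
    fun i => hsecond_dir hωo huC h (Pi.single i 1, 0) p hp
  have e2 : fderiv ℝ (fun q => fderiv ℝ (phh u h) q ((0 : Fin m → ℝ), 1)) p ((0 : Fin m → ℝ), 1)
      = h⁻¹ * (fderiv ℝ (pdT u) (p + ((0 : Fin m → ℝ), h)) ((0 : Fin m → ℝ), 1)
          - fderiv ℝ (pdT u) p ((0 : Fin m → ℝ), 1)) :=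
    hsecond_dir hωo huC h ((0 : Fin m → ℝ), 1) p hp
  rw [Finset.sum_congr rfl fun i _ => e1 i, e2]
  have key : ∀ (A B : Fin m → ℝ) (aT bT : ℝ),
      (∑ i, h⁻¹ * (A i - B i)) + h⁻¹ * (aT - bT)
        = h⁻¹ * (((∑ i, A i) + aT) - ((∑ i, B i) + bT)) := by
    intro A B aT bT
    rw [← Finset.mul_sum, Finset.sum_sub_distrib]
    ring
  rw [key]
  have hlap1 : ((∑ i, fderiv ℝ (pdX u i) (p + ((0 : Fin m → ℝ), h)) (Pi.single i 1, 0))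
      + fderiv ℝ (pdT u) (p + ((0 : Fin m → ℝ), h)) ((0 : Fin m → ℝ), 1))
      = lapC u (p + ((0 : Fin m → ℝ), h)) := rfl
  have hlap0 : ((∑ i, fderiv ℝ (pdX u i) p (Pi.single i 1, 0))
      + fderiv ℝ (pdT u) p ((0 : Fin m → ℝ), 1)) = lapC u p := rfl
  rw [hlap1, hlap0]
  have ha : lapC u p = -f (u p) := by
    have := heq p.1 hp p.2
    simp only [Prod.mk.eta] at this
    linarith
  have hudef : u (p.1, p.2 + h) = u (p + ((0 : Fin m → ℝ), h)) := by rw [hshift]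
  have hb : lapC u (p + ((0 : Fin m → ℝ), h)) = -f (u (p + ((0 : Fin m → ℝ), h))) := by
    have := heq p.1 hp (p.2 + h)
    rw [hshift (q := p)] at this
    linarith
  rw [ha, hb, slp, phh, hudef]
  have hne : u (p + ((0 : Fin m → ℝ), h)) - u p ≠ 0 := by
    rw [← hudef]
    exact sub_ne_zero.2 (hba hωo huC hmono hh p hp).ne'
  field_simp
  ring

include hωo huC in
theorem hVv_dir {χ : (Fin m → ℝ) × ℝ → ℝ} (hχ : ContDiff ℝ (⊤ : ℕ∞) χ)
    (hmono : ∀ x' ∈ ω, ∀ t : ℝ, 0 < fderiv ℝ u (x', t) (0, 1))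
    {h : ℝ} (hh : 0 < h) (v p : (Fin m → ℝ) × ℝ) (hp : p.1 ∈ ω) :
    (fderiv ℝ χ p v)^2
      - (fderiv ℝ χ p v - χ p * (phh u h p)⁻¹ * fderiv ℝ (phh u h) p v)^2
      - fderiv ℝ (Vv χ u h v) p v
    = -(χ p * χ p * (phh u h p)⁻¹)
        * fderiv ℝ (fun q => fderiv ℝ (phh u h) q v) p v := by
  have hΦ := hphh_pos hωo huC hmono hh p hp
  have hΦne : phh u h p ≠ 0 := hΦ.ne'
  have hφ2 := hphh2 hωo huC h p hp
  have hχd : HasFDerivAt χ (fderiv ℝ χ p) p := ((hχ.differentiable (by simp)) p).hasFDerivAt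
  have hφd : HasFDerivAt (phh u h) (fderiv ℝ (phh u h) p) p :=
    (hφ2.differentiableAt (by norm_num)).hasFDerivAt
  have hinv : HasFDerivAt (fun q => (phh u h q)⁻¹)
      ((ContinuousLinearMap.smulRight (1 : ℝ →L[ℝ] ℝ)
        (-(phh u h p ^ 2)⁻¹)).comp (fderiv ℝ (phh u h) p)) p :=
    (hasFDerivAt_inv hΦne).comp p hφd
  have hdd : HasFDerivAt (fun q => fderiv ℝ (phh u h) q v)
      (fderiv ℝ (fun q => fderiv ℝ (phh u h) q v) p) p := by
    have h1 : ContDiffAt ℝ 1 (fderiv ℝ (phh u h)) p := hφ2.fderiv_right (by norm_num)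
    exact ((h1.clm_apply contDiffAt_const).differentiableAt one_ne_zero).hasFDerivAt
  have htot := ((hχd.mul hχd).mul hinv).mul hdd
  rw [Vv_def, show (fun p => χ p * χ p * (phh u h p)⁻¹ * fderiv ℝ (phh u h) p v) = ((χ * χ * fun q => (phh u h q)⁻¹) * fun q => fderiv ℝ (phh u h) q v) from rfl, htot.fderiv]
  simp only [ContinuousLinearMap.add_apply, ContinuousLinearMap.smul_apply,
    ContinuousLinearMap.comp_apply, ContinuousLinearMap.smulRight_apply,
    ContinuousLinearMap.one_apply, smul_eq_mul, Pi.mul_apply]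
  field_simp
  ring

include hωo huC in
theorem hpoint {χ : (Fin m → ℝ) × ℝ → ℝ} (hχ : ContDiff ℝ (⊤ : ℕ∞) χ) (f : ℝ → ℝ)
    (heq : ∀ x' ∈ ω, ∀ t : ℝ, -lapC u (x', t) = f (u (x', t)))
    (hmono : ∀ x' ∈ ω, ∀ t : ℝ, 0 < fderiv ℝ u (x', t) (0, 1))
    {h : ℝ} (hh : 0 < h) (p : (Fin m → ℝ) × ℝ) (hp : p.1 ∈ ω) :
    ((∑ i, (fderiv ℝ χ p (Pi.single i 1, 0))^2) + (fderiv ℝ χ p ((0 : Fin m → ℝ), 1))^2)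
        - slp f u h p * χ p ^ 2
      = ((∑ i, (fderiv ℝ χ p (Pi.single i 1, 0)
            - χ p * (phh u h p)⁻¹ * fderiv ℝ (phh u h) p (Pi.single i 1, 0))^2)
          + (fderiv ℝ χ p ((0 : Fin m → ℝ), 1)
            - χ p * (phh u h p)⁻¹ * fderiv ℝ (phh u h) p ((0 : Fin m → ℝ), 1))^2)
        + ((∑ i, fderiv ℝ (Vv χ u h (Pi.single i 1, 0)) p (Pi.single i 1, 0))
          + fderiv ℝ (Vv χ u h ((0 : Fin m → ℝ), 1)) p ((0 : Fin m → ℝ), 1)) := by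
  have hΦ := hphh_pos hωo huC hmono hh p hp
  have hΦne : phh u h p ≠ 0 := hΦ.ne'
  set cc : ℝ := -(χ p * χ p * (phh u h p)⁻¹) with hcc
  have e : ∀ v : (Fin m → ℝ) × ℝ,
      (fderiv ℝ χ p v)^2
        = (fderiv ℝ χ p v - χ p * (phh u h p)⁻¹ * fderiv ℝ (phh u h) p v)^2
          + fderiv ℝ (Vv χ u h v) p v
          + cc * fderiv ℝ (fun q => fderiv ℝ (phh u h) q v) p v := by
    intro v
    have := hVv_dir hωo huC hχ hmono hh v p hp
    rw [hcc]
    linarith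
  rw [Finset.sum_congr rfl fun i _ => e (Pi.single i 1, 0), e ((0 : Fin m → ℝ), 1)]
  rw [Finset.sum_add_distrib, Finset.sum_add_distrib, ← Finset.mul_sum]
  have hS := hsum hωo huC f heq hmono hh p hp
  have hccS : cc * ((∑ i, fderiv ℝ (fun q => fderiv ℝ (phh u h) q (Pi.single i 1, 0)) p
        (Pi.single i 1, 0))
      + fderiv ℝ (fun q => fderiv ℝ (phh u h) q ((0 : Fin m → ℝ), 1)) p ((0 : Fin m → ℝ), 1))
      = slp f u h p * χ p ^ 2 := by
    rw [hS, hcc]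
    field_simp
  have harr : ∀ SR SD Ssum rT dT sT X : ℝ,
      cc * Ssum + (cc * sT) = X →
      ((SR + SD + cc * Ssum) + (rT ^ 2 + dT + cc * sT)) - X = (SR + rT ^ 2) + (SD + dT) := by
    intro SR SD Ssum rT dT sT X hX
    linarith
  refine harr _ _ _ _ _ _ _ ?_
  rw [← mul_add]
  exact hccS

section step
variable {f : ℝ → ℝ} (hf : ContDiff ℝ 1 f)
  {χ : (Fin m → ℝ) × ℝ → ℝ} (hχ : ContDiff ℝ (⊤ : ℕ∞) χ) (hχK : HasCompactSupport χ)
  (hχΩ : tsupport χ ⊆ ω ×ˢ (Set.univ : Set ℝ))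

include hωo huC hχ hχΩ in
theorem hVvC1 (hmono : ∀ x' ∈ ω, ∀ t : ℝ, 0 < fderiv ℝ u (x', t) (0, 1))
    {h : ℝ} (hh : 0 < h) (v : (Fin m → ℝ) × ℝ) : ContDiff ℝ 1 (Vv χ u h v) := by
  rw [contDiff_iff_contDiffAt]
  intro p
  by_cases hp : p ∈ tsupport χ
  · have hp1 : p.1 ∈ ω := (hχΩ hp).1
    have hφ2 := hphh2 hωo huC h p hp1
    have hΦne : phh u h p ≠ 0 := (hphh_pos hωo huC hmono hh p hp1).ne'
    have hc1 : ContDiffAt ℝ 1 χ p := hχ.contDiffAt.of_le (by simp)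
    have hc2 : ContDiffAt ℝ 1 (fun q => (phh u h q)⁻¹) p :=
      (hφ2.of_le (by norm_num)).inv hΦne
    have hc3 : ContDiffAt ℝ 1 (fun q => fderiv ℝ (phh u h) q v) p :=
      (hφ2.fderiv_right (by norm_num)).clm_apply contDiffAt_const
    exact ((hc1.mul hc1).mul hc2).mul hc3
  · have hev0 : χ =ᶠ[nhds p] 0 := notMem_tsupport_iff_eventuallyEq.1 hp
    have hev : Vv χ u h v =ᶠ[nhds p] (fun _ => (0:ℝ)) := by
      filter_upwards [hev0] with q hq
      simp [Vv, hq]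
    exact (contDiffAt_const (c := (0:ℝ))).congr_of_eventuallyEq hev

include hχK in
theorem hVvsupp {h : ℝ} (v : (Fin m → ℝ) × ℝ) : HasCompactSupport (Vv χ u h v) := by
  refine HasCompactSupport.intro hχK fun q hq => ?_
  simp [Vv, image_eq_zero_of_notMem_tsupport hq]

include hωo huC hf hχ hχΩ in
theorem slp_cont (hmono : ∀ x' ∈ ω, ∀ t : ℝ, 0 < fderiv ℝ u (x', t) (0, 1))
    {h : ℝ} (hh : 0 < h) :
    Continuous (fun p => slp f u h p * χ p ^ 2) := by
  have hχcont : Continuous χ := hχ.continuous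
  rw [continuous_iff_continuousAt]
  intro p
  by_cases hp : p ∈ tsupport χ
  · have hp1 : p.1 ∈ ω := (hχΩ hp).1
    have hp1' : ((p.1, p.2 + h) : (Fin m → ℝ) × ℝ).1 ∈ ω := hp1
    have hcu : ContinuousAt u p := (hu2 hωo huC p hp1).continuousAt
    have hcτ : ContinuousAt (fun q : (Fin m → ℝ) × ℝ => u (q.1, q.2 + h)) p := by
      have hi : Continuous (fun q : (Fin m → ℝ) × ℝ => ((q.1, q.2 + h) : (Fin m → ℝ) × ℝ)) :=
        continuous_fst.prodMk (continuous_snd.add continuous_const)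
      exact Filter.Tendsto.comp ((hu2 hωo huC (p.1, p.2 + h) hp1').continuousAt)
        hi.continuousAt
    have hne : u (p.1, p.2 + h) - u p ≠ 0 :=
      sub_ne_zero.2 (hba hωo huC hmono hh p hp1).ne'
    have h1 : ContinuousAt (fun q => slp f u h q) p := by
      refine ContinuousAt.div ?_ ?_ hne
      · exact ((hf.continuous.continuousAt).comp hcτ).sub
          ((hf.continuous.continuousAt).comp hcu)
      · exact hcτ.sub hcu
    exact h1.mul ((hχcont.pow 2).continuousAt)
  · have hev0 : χ =ᶠ[nhds p] 0 := notMem_tsupport_iff_eventuallyEq.1 hp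
    have hev : (fun p => slp f u h p * χ p ^ 2) =ᶠ[nhds p] (fun _ => (0:ℝ)) := by
      filter_upwards [hev0] with q hq
      simp [hq]
    exact ContinuousAt.congr continuousAt_const hev.symm

include hωo huC hf hχ hχK hχΩ in
theorem step (heq : ∀ x' ∈ ω, ∀ t : ℝ, -lapC u (x', t) = f (u (x', t)))
    (hmono : ∀ x' ∈ ω, ∀ t : ℝ, 0 < fderiv ℝ u (x', t) (0, 1))
    {h : ℝ} (hh : 0 < h) :
    (∫ p, slp f u h p * χ p ^ 2)
      ≤ ∫ p, ((∑ i, (fderiv ℝ χ p (Pi.single i 1, 0))^2)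
          + (fderiv ℝ χ p ((0 : Fin m → ℝ), 1))^2) := by
  set G1 : (Fin m → ℝ) × ℝ → ℝ := fun p =>
    (∑ i, (fderiv ℝ χ p (Pi.single i 1, 0))^2) + (fderiv ℝ χ p ((0 : Fin m → ℝ), 1))^2
    with hG1
  set Sl : (Fin m → ℝ) × ℝ → ℝ := fun p => slp f u h p * χ p ^ 2 with hSl
  set R : (Fin m → ℝ) × ℝ → ℝ := fun p =>
    (∑ i, (fderiv ℝ χ p (Pi.single i 1, 0)
        - χ p * (phh u h p)⁻¹ * fderiv ℝ (phh u h) p (Pi.single i 1, 0))^2)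
      + (fderiv ℝ χ p ((0 : Fin m → ℝ), 1)
        - χ p * (phh u h p)⁻¹ * fderiv ℝ (phh u h) p ((0 : Fin m → ℝ), 1))^2 with hR
  set D : (Fin m → ℝ) × ℝ → ℝ := fun p =>
    (∑ i, fderiv ℝ (Vv χ u h (Pi.single i 1, 0)) p (Pi.single i 1, 0))
      + fderiv ℝ (Vv χ u h ((0 : Fin m → ℝ), 1)) p ((0 : Fin m → ℝ), 1) with hD
  have hident : ∀ p, G1 p - Sl p = R p + D p := by
    intro p
    by_cases hp : p ∈ tsupport χ
    · exact hpoint hωo huC hχ f heq hmono hh p (hχΩ hp).1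
    · have hev0 : χ =ᶠ[nhds p] 0 := notMem_tsupport_iff_eventuallyEq.1 hp
      have hfz : fderiv ℝ χ p = 0 := by
        rw [hev0.fderiv_eq]; exact fderiv_const_apply 0
      have hχ0 : χ p = 0 := image_eq_zero_of_notMem_tsupport hp
      have hVf : ∀ v : (Fin m → ℝ) × ℝ, fderiv ℝ (Vv χ u h v) p = 0 := by
        intro v
        have hev : Vv χ u h v =ᶠ[nhds p] (fun _ => (0:ℝ)) := by
          filter_upwards [hev0] with q hq
          simp [Vv, hq]
        rw [hev.fderiv_eq]; exact fderiv_const_apply 0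
      simp [hG1, hSl, hR, hD, hfz, hχ0, hVf]
  have hχcont : Continuous χ := hχ.continuous
  have hdχ : Continuous (fderiv ℝ χ) := hχ.continuous_fderiv (by simp)
  have hG1cont : Continuous G1 := by
    refine Continuous.add ?_ ((hdχ.clm_apply continuous_const).pow 2)
    exact continuous_finset_sum _ fun i _ => (hdχ.clm_apply continuous_const).pow 2
  have hG1supp : HasCompactSupport G1 := by
    refine HasCompactSupport.intro hχK fun q hq => ?_
    have : fderiv ℝ χ q = 0 := by
      by_contra hne
      exact hq (support_fderiv_subset ℝ hne)
    simp [hG1, this]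
  have hG1int : Integrable G1 := hG1cont.integrable_of_hasCompactSupport hG1supp
  have hSlcont : Continuous Sl := slp_cont hωo huC hf hχ hχΩ hmono hh
  have hSlsupp : HasCompactSupport Sl := by
    refine HasCompactSupport.intro hχK fun q hq => ?_
    simp [hSl, image_eq_zero_of_notMem_tsupport hq]
  have hSlint : Integrable Sl := hSlcont.integrable_of_hasCompactSupport hSlsupp
  have hVvint : ∀ v : (Fin m → ℝ) × ℝ,
      Integrable (fun p => fderiv ℝ (Vv χ u h v) p v) := by
    intro v
    have hC1 := hVvC1 hωo huC hχ hχΩ hmono hh v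
    have hcont : Continuous fun p => fderiv ℝ (Vv χ u h v) p v :=
      (hC1.continuous_fderiv one_ne_zero).clm_apply continuous_const
    refine hcont.integrable_of_hasCompactSupport (HasCompactSupport.intro hχK fun q hq => ?_)
    have hev : Vv χ u h v =ᶠ[nhds q] (fun _ => (0:ℝ)) := by
      filter_upwards [notMem_tsupport_iff_eventuallyEq.1 hq] with q' hq'
      simp [Vv, hq']
    rw [hev.fderiv_eq, fderiv_const_apply 0]
    rfl
  have hz : ∀ v : (Fin m → ℝ) × ℝ, (∫ p, fderiv ℝ (Vv χ u h v) p v) = 0 := fun v =>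
    integral_fderiv_apply_eq_zero _ (hVvC1 hωo huC hχ hχΩ hmono hh v) (hVvsupp hχK v) v
  have hDzero : (∫ p, D p) = 0 := by
    rw [hD, integral_add (integrable_finset_sum _ fun i _ => hVvint _) (hVvint _),
      integral_finset_sum _ fun i _ => hVvint _]
    simp [hz]
  have hDint : Integrable D :=
    (integrable_finset_sum _ fun i _ => hVvint _).add (hVvint _)
  have hRint : Integrable R := by
    have : R = fun p => G1 p - Sl p - D p := funext fun p => by have := hident p; linarith
    rw [this]
    exact (hG1int.sub hSlint).sub hDint
  have hRnonneg : 0 ≤ ∫ p, R p := by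
    refine integral_nonneg fun p => ?_
    rw [hR]
    positivity
  have hsplit : (∫ p, (G1 p - Sl p)) = (∫ p, R p) + ∫ p, D p := by
    rw [← integral_add hRint hDint]
    exact integral_congr_ae (Filter.EventuallyEq.of_eq (funext hident))
  have hsub : (∫ p, (G1 p - Sl p)) = (∫ p, G1 p) - ∫ p, Sl p := integral_sub hG1int hSlint
  linarith
end step
end facts
end MonSt


open MonSt in
/-- a solution on the cylinder `Ω = ω × ℝ`, vanishing on `∂ω × ℝ` and strictly
increasing in the last variable, is stable: the quadratic form of the linearized operator is
nonnegative on smooth compactly supported test functions supported in `Ω`. -/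
theorem monotone_implies_stable (N : ℕ) (hN : 2 ≤ N)
    (ω : Set (Fin (N - 1) → ℝ)) (hωo : IsOpen ω) (hωb : Bornology.IsBounded ω)
    (hωs : HasSmoothBoundary ω)
    (f : ℝ → ℝ) (hf : ContDiff ℝ 1 f)
    (u : (Fin (N - 1) → ℝ) × ℝ → ℝ)
    (huC : ContDiffOn ℝ 2 u (closure ω ×ˢ (Set.univ : Set ℝ)))
    (heq : ∀ x' ∈ ω, ∀ t : ℝ, -lapC u (x', t) = f (u (x', t)))
    (hbd : ∀ x' ∈ frontier ω, ∀ t : ℝ, u (x', t) = 0)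
    (hmono : ∀ x' ∈ ω, ∀ t : ℝ, 0 < pdT u (x', t)) :
    ∀ χ : (Fin (N - 1) → ℝ) × ℝ → ℝ, ContDiff ℝ (⊤ : ℕ∞) χ → HasCompactSupport χ →
      tsupport χ ⊆ ω ×ˢ (Set.univ : Set ℝ) →
      0 ≤ ∫ p in ω ×ˢ (Set.univ : Set ℝ),
        (((∑ i, (pdX χ i p)^2) + (pdT χ p)^2) - deriv f (u p) * (χ p)^2) := by
  intro χ hχ hχK hχΩ
  have hmono' : ∀ x' ∈ ω, ∀ t : ℝ, 0 < fderiv ℝ u (x', t) (0, 1) := hmono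
  show 0 ≤ ∫ p in ω ×ˢ (Set.univ : Set ℝ),
    (((∑ i, (fderiv ℝ χ p (Pi.single i 1, 0))^2) + (fderiv ℝ χ p ((0 : Fin (N - 1) → ℝ), 1))^2)
      - deriv f (u p) * (χ p)^2)
  have hχcont : Continuous χ := hχ.continuous
  have hdχ : Continuous (fderiv ℝ χ) := hχ.continuous_fderiv (by simp)
  -- zero off the support
  have hfz : ∀ p, p ∉ tsupport χ → fderiv ℝ χ p = 0 := by
    intro q hq
    by_contra hne
    exact hq (support_fderiv_subset ℝ hne)
  -- pass to the integral over the whole space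
  rw [setIntegral_eq_integral_of_forall_compl_eq_zero (f := fun p =>
    (((∑ i, (fderiv ℝ χ p (Pi.single i 1, 0))^2) + (fderiv ℝ χ p ((0 : Fin (N - 1) → ℝ), 1))^2)
      - deriv f (u p) * (χ p)^2)) (fun p hp => by
    have hpK : p ∉ tsupport χ := fun hmem => hp (hχΩ hmem)
    simp [hfz p hpK, image_eq_zero_of_notMem_tsupport hpK])]
  -- integrability of the two parts
  have hG1cont : Continuous (fun p : (Fin (N - 1) → ℝ) × ℝ =>
      (∑ i, (fderiv ℝ χ p (Pi.single i 1, 0))^2) + (fderiv ℝ χ p ((0 : Fin (N - 1) → ℝ), 1))^2) := by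
    refine Continuous.add ?_ ((hdχ.clm_apply continuous_const).pow 2)
    exact continuous_finset_sum _ fun i _ => (hdχ.clm_apply continuous_const).pow 2
  have hG1int : Integrable (fun p : (Fin (N - 1) → ℝ) × ℝ =>
      (∑ i, (fderiv ℝ χ p (Pi.single i 1, 0))^2) + (fderiv ℝ χ p ((0 : Fin (N - 1) → ℝ), 1))^2) := by
    refine hG1cont.integrable_of_hasCompactSupport
      (HasCompactSupport.intro hχK fun q hq => ?_)
    simp [hfz q hq]
  have hFcont : Continuous (fun p => deriv f (u p) * χ p ^ 2) := by
    rw [continuous_iff_continuousAt]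
    intro p
    by_cases hp : p ∈ tsupport χ
    · have hp1 : p.1 ∈ ω := (hχΩ hp).1
      exact (((hf.continuous_deriv le_rfl).continuousAt).comp
        (hu2 hωo huC p hp1).continuousAt).mul ((hχcont.pow 2).continuousAt)
    · have hev : (fun p => deriv f (u p) * χ p ^ 2) =ᶠ[nhds p] (fun _ => (0:ℝ)) := by
        filter_upwards [notMem_tsupport_iff_eventuallyEq.1 hp] with q hq
        simp [hq]
      exact ContinuousAt.congr continuousAt_const hev.symm
  have hFint : Integrable (fun p => deriv f (u p) * χ p ^ 2) := by
    refine hFcont.integrable_of_hasCompactSupport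
      (HasCompactSupport.intro hχK fun q hq => ?_)
    simp [image_eq_zero_of_notMem_tsupport hq]
  rw [integral_sub hG1int hFint]
  -- the uniform bound for the difference quotients
  set K' : Set ((Fin (N - 1) → ℝ) × ℝ) :=
    (fun q : ((Fin (N - 1) → ℝ) × ℝ) × ℝ => (q.1.1, q.1.2 + q.2)) ''
      (tsupport χ ×ˢ Set.Icc (0:ℝ) 1) with hK'
  have hK'c : IsCompact K' := (hχK.prod isCompact_Icc).image (by fun_prop)
  have hK'sub : K' ⊆ closure ω ×ˢ (Set.univ : Set ℝ) := by
    rintro - ⟨⟨q, s⟩, ⟨hq, -⟩, rfl⟩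
    exact ⟨subset_closure (hχΩ hq).1, trivial⟩
  obtain ⟨A, hA⟩ := hK'c.exists_bound_of_continuousOn (huC.continuousOn.mono hK'sub)
  obtain ⟨M, hM⟩ := (isCompact_Icc (a := -A) (b := A)).exists_bound_of_continuousOn
    ((hf.continuous_deriv le_rfl).continuousOn)
  have hbound : ∀ h ∈ Set.Ioc (0:ℝ) 1, ∀ p, ‖slp f u h p * χ p ^ 2‖ ≤ M * χ p ^ 2 := by
    intro h hh p
    by_cases hp : p ∈ tsupport χ
    · have hp1 : p.1 ∈ ω := (hχΩ hp).1
      have hpK' : p ∈ K' :=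
        ⟨(p, 0), ⟨hp, by constructor <;> norm_num⟩, by simp⟩
      have hbK' : ((p.1, p.2 + h) : (Fin (N - 1) → ℝ) × ℝ) ∈ K' :=
        ⟨(p, h), ⟨hp, ⟨hh.1.le, hh.2⟩⟩, rfl⟩
      have ha' := hA _ hpK'
      have hb' := hA _ hbK'
      have hab : u p < u (p.1, p.2 + h) := hba hωo huC hmono' hh.1 p hp1
      obtain ⟨ξ, hξ, hslope⟩ := exists_hasDerivAt_eq_slope f (deriv f) hab
        (hf.continuous.continuousOn) (fun x _ => (hf.differentiable one_ne_zero x).hasDerivAt)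
      have hξmem : ξ ∈ Set.Icc (-A) A := by
        rw [Real.norm_eq_abs, abs_le] at ha' hb'
        exact ⟨le_trans ha'.1 hξ.1.le, le_trans hξ.2.le hb'.2⟩
      have hMξ := hM ξ hξmem
      have hslp : slp f u h p = deriv f ξ := by rw [hslope]; rfl
      rw [norm_mul, hslp]
      have h2 : ‖χ p ^ 2‖ = χ p ^ 2 := by
        rw [Real.norm_eq_abs, abs_of_nonneg (sq_nonneg _)]
      rw [h2]
      exact mul_le_mul_of_nonneg_right hMξ (sq_nonneg _)
    · have hz : χ p = 0 := image_eq_zero_of_notMem_tsupport hp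
      simp [hz]
  have hbint : Integrable (fun p : (Fin (N - 1) → ℝ) × ℝ => M * χ p ^ 2) :=
    (continuous_const.mul (hχcont.pow 2)).integrable_of_hasCompactSupport
      (HasCompactSupport.intro hχK fun q hq => by
        simp [image_eq_zero_of_notMem_tsupport hq])
  have htend_pt : ∀ p, Filter.Tendsto (fun h => slp f u h p * χ p ^ 2)
      (nhdsWithin 0 (Set.Ioi 0)) (nhds (deriv f (u p) * χ p ^ 2)) := by
    intro p
    by_cases hp1 : p.1 ∈ ω
    · have hder : HasDerivAt f (deriv f (u p)) (u p) :=
        (hf.differentiable one_ne_zero (u p)).hasDerivAt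
      have hslope := hasDerivAt_iff_tendsto_slope.1 hder
      have hg : Continuous (fun h : ℝ => ((p.1, p.2 + h) : (Fin (N - 1) → ℝ) × ℝ)) := by fun_prop
      have hg0 : ((p.1, p.2 + (0:ℝ)) : (Fin (N - 1) → ℝ) × ℝ) = p := by simp
      have hc : Filter.Tendsto (fun h : ℝ => u (p.1, p.2 + h)) (nhds 0) (nhds (u p)) := by
        have hgt : Filter.Tendsto (fun h : ℝ => ((p.1, p.2 + h) : (Fin (N - 1) → ℝ) × ℝ))
            (nhds 0) (nhds p) := by
          have := hg.continuousAt (x := (0:ℝ))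
          rwa [ContinuousAt, hg0] at this
        exact Filter.Tendsto.comp ((hu2 hωo huC p hp1).continuousAt) hgt
      have hz : Filter.Tendsto (fun h : ℝ => u (p.1, p.2 + h))
          (nhdsWithin 0 (Set.Ioi 0)) (nhdsWithin (u p) {u p}ᶜ) := by
        rw [tendsto_nhdsWithin_iff]
        refine ⟨hc.mono_left nhdsWithin_le_nhds, ?_⟩
        filter_upwards [self_mem_nhdsWithin] with h hh
        exact (hba hωo huC hmono' hh p hp1).ne'
      have htail := hslope.comp hz
      have hcongr : ∀ h : ℝ, slope f (u p) (u (p.1, p.2 + h)) = slp f u h p := by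
        intro h
        rw [slope_def_field]
        rfl
      exact ((htail.congr hcongr).mul_const (χ p ^ 2))
    · have hpt : p ∉ tsupport χ := fun hmem => hp1 (hχΩ hmem).1
      have hz : χ p = 0 := image_eq_zero_of_notMem_tsupport hpt
      simp only [hz]
      simpa using (tendsto_const_nhds :
        Filter.Tendsto (fun _ : ℝ => (0:ℝ)) (nhdsWithin 0 (Set.Ioi 0)) (nhds 0))
  have hmeas : ∀ᶠ h in nhdsWithin (0:ℝ) (Set.Ioi 0),
      AEStronglyMeasurable (fun p => slp f u h p * χ p ^ 2) volume := by
    filter_upwards [self_mem_nhdsWithin] with h hh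
    exact (slp_cont hωo huC hf hχ hχΩ hmono' hh).aestronglyMeasurable
  have hbnd : ∀ᶠ h in nhdsWithin (0:ℝ) (Set.Ioi 0),
      ∀ᵐ p ∂(volume : MeasureTheory.Measure ((Fin (N - 1) → ℝ) × ℝ)),
        ‖slp f u h p * χ p ^ 2‖ ≤ M * χ p ^ 2 := by
    filter_upwards [Ioc_mem_nhdsGT_of_mem ⟨le_refl (0:ℝ), one_pos⟩] with h hh
    exact MeasureTheory.ae_of_all _ (hbound h hh)
  have htend := MeasureTheory.tendsto_integral_filter_of_dominated_convergence
    (μ := volume) (bound := fun p => M * χ p ^ 2) hmeas hbnd hbint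
    (MeasureTheory.ae_of_all _ htend_pt)
  have hle : ∀ᶠ h in nhdsWithin (0:ℝ) (Set.Ioi 0),
      (∫ p, slp f u h p * χ p ^ 2)
        ≤ ∫ p, ((∑ i, (fderiv ℝ χ p (Pi.single i 1, 0))^2)
            + (fderiv ℝ χ p ((0 : Fin (N - 1) → ℝ), 1))^2) := by
    filter_upwards [self_mem_nhdsWithin] with h hh
    exact step hωo huC hf hχ hχK hχΩ heq hmono' hh
  have hfin := le_of_tendsto htend hle
  linarith
end

section
/- Let Ω ⊆ ℝ² be open, f : ℝ → ℝ continuously differentiable with primitive F(t) = ∫₀ᵗ f(s) ds, and let u : Ω → ℝ be smooth with −Δu = f(u) in Ω. Define 𝐮 = ∇⊥u = (−∂u/∂x₂, ∂u/∂x₁) and p = −|∇u|²/2 − F(u). Then 𝐮 and p solve the stationary Euler equations in Ω: div 𝐮 = ∂𝐮¹/∂x₁ + ∂𝐮²/∂x₂ = 0 and (𝐮·∇)𝐮 = −∇p, i.e. 𝐮¹ ∂𝐮ⁱ/∂x₁ + 𝐮² ∂𝐮ⁱ/∂x₂ = −∂p/∂xᵢ in Ω for i = 1, 2. -/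
open MeasureTheory

/-- Partial derivative of `u : ℝ² → ℝ` in the first coordinate. -/
noncomputable def pd1 (u : ℝ × ℝ → ℝ) (p : ℝ × ℝ) : ℝ := fderiv ℝ u p (1, 0)

/-- Partial derivative of `u : ℝ² → ℝ` in the second coordinate. -/
noncomputable def pd2 (u : ℝ × ℝ → ℝ) (p : ℝ × ℝ) : ℝ := fderiv ℝ u p (0, 1)

/-- Laplacian of `u : ℝ² → ℝ`. -/
noncomputable def lap2 (u : ℝ × ℝ → ℝ) (p : ℝ × ℝ) : ℝ :=
  fderiv ℝ (pd1 u) p (1, 0) + fderiv ℝ (pd2 u) p (0, 1)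

/-- Gradient of `u : ℝ² → ℝ`. -/
noncomputable def grad2 (u : ℝ × ℝ → ℝ) (p : ℝ × ℝ) : ℝ × ℝ := (pd1 u p, pd2 u p)

/-- if `u` is a smooth solution of `-Δu = f(u)` in an open set `Ω ⊆ ℝ²`, then
`𝐮 = ∇⊥u = (−∂₂u, ∂₁u)` with pressure `p = −|∇u|²/2 − F(u)` solves the stationary Euler
equations in `Ω`. -/
theorem streamfunction_gives_euler
    (Ω : Set (ℝ × ℝ)) (hΩ : IsOpen Ω)
    (f : ℝ → ℝ) (hf : ContDiff ℝ 1 f)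
    (u : ℝ × ℝ → ℝ) (huC : ContDiffOn ℝ (⊤ : ℕ∞) u Ω)
    (heq : ∀ q ∈ Ω, -lap2 u q = f (u q)) :
    ∀ q ∈ Ω,
      (pd1 (fun z => -(pd2 u z)) q + pd2 (fun z => pd1 u z) q = 0) ∧
      ((-(pd2 u q)) * pd1 (fun z => -(pd2 u z)) q
          + (pd1 u q) * pd2 (fun z => -(pd2 u z)) q
        = -(pd1 (fun z => -((pd1 u z)^2 + (pd2 u z)^2)/2 - primF f (u z)) q)) ∧
      ((-(pd2 u q)) * pd1 (fun z => pd1 u z) q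
          + (pd1 u q) * pd2 (fun z => pd1 u z) q
        = -(pd2 (fun z => -((pd1 u z)^2 + (pd2 u z)^2)/2 - primF f (u z)) q)) := by
  intro q hq
  have hmem : Ω ∈ nhds q := hΩ.mem_nhds hq
  have hu : ContDiffAt ℝ (⊤ : ℕ∞) u q := huC.contDiffAt hmem
  have hud : DifferentiableAt ℝ u q := hu.differentiableAt (by simp)
  have hUd : DifferentiableAt ℝ (fderiv ℝ u) q :=
    (hu.fderiv_right (m := 1) (WithTop.coe_le_coe.mpr le_top)).differentiableAt one_ne_zero
  set D2 := fderiv ℝ (fderiv ℝ u) q with hD2def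
  have hsymm : ∀ v w, D2 v w = D2 w v := hu.isSymmSndFDerivAt (by simp only [minSmoothness_of_isRCLikeNormedField]; exact WithTop.coe_le_coe.mpr le_top)
  -- derivative of partial derivatives
  have hA : HasFDerivAt (pd1 u) (D2.flip (1, 0)) q := by
    have hd : DifferentiableAt ℝ (fun z => fderiv ℝ u z (1, 0)) q :=
      hUd.clm_apply (differentiableAt_const _)
    have h := hd.hasFDerivAt
    rw [fderiv_clm_apply hUd (differentiableAt_const _)] at h
    simp at h; exact h
  have hB : HasFDerivAt (pd2 u) (D2.flip (0, 1)) q := by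
    have hd : DifferentiableAt ℝ (fun z => fderiv ℝ u z (0, 1)) q :=
      hUd.clm_apply (differentiableAt_const _)
    have h := hd.hasFDerivAt
    rw [fderiv_clm_apply hUd (differentiableAt_const _)] at h
    simp at h; exact h
  -- the PDE in terms of second derivatives
  have hlap : lap2 u q = D2 (1, 0) (1, 0) + D2 (0, 1) (0, 1) := by
    show fderiv ℝ (pd1 u) q (1, 0) + fderiv ℝ (pd2 u) q (0, 1) = _
    rw [hA.fderiv, hB.fderiv]; simp
  have hpde : -(D2 (1, 0) (1, 0) + D2 (0, 1) (0, 1)) = f (u q) := by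
    rw [← heq q hq, hlap]
  -- FTC
  have hcont := hf.continuous
  have hF : HasDerivAt (primF f) (f (u q)) (u q) := by
    show HasDerivAt (fun t => ∫ s in (0:ℝ)..t, f s) (f (u q)) (u q)
    exact intervalIntegral.integral_hasDerivAt_right (hcont.intervalIntegrable _ _)
      (hcont.stronglyMeasurableAtFilter _ _) hcont.continuousAt
  have hFu : HasFDerivAt (fun z => primF f (u z)) (f (u q) • fderiv ℝ u q) q :=
    hF.comp_hasFDerivAt q hud.hasFDerivAt
  -- derivative of the pressure
  have hsq1 : HasFDerivAt (fun z => (pd1 u z) ^ 2)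
      (pd1 u q • D2.flip (1, 0) + pd1 u q • D2.flip (1, 0)) q := by
    have h := hA.mul hA; simp only [pow_two]; exact h
  have hsq2 : HasFDerivAt (fun z => (pd2 u z) ^ 2)
      (pd2 u q • D2.flip (0, 1) + pd2 u q • D2.flip (0, 1)) q := by
    have h := hB.mul hB; simp only [pow_two]; exact h
  have hneg := (hsq1.add hsq2).neg
  have hhalf : HasFDerivAt (fun z => -((pd1 u z) ^ 2 + (pd2 u z) ^ 2) / 2)
      ((2:ℝ)⁻¹ • -(pd1 u q • D2.flip (1, 0) + pd1 u q • D2.flip (1, 0)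
        + (pd2 u q • D2.flip (0, 1) + pd2 u q • D2.flip (0, 1)))) q := by
    refine (hneg.const_smul ((2:ℝ)⁻¹)).congr_of_eventuallyEq (Filter.Eventually.of_forall fun z => ?_)
    simp only [Pi.neg_apply, Pi.add_apply, Pi.smul_apply, smul_eq_mul]; ring
  have hg : HasFDerivAt (fun z => -((pd1 u z) ^ 2 + (pd2 u z) ^ 2) / 2 - primF f (u z))
      ((2:ℝ)⁻¹ • -(pd1 u q • D2.flip (1, 0) + pd1 u q • D2.flip (1, 0)
        + (pd2 u q • D2.flip (0, 1) + pd2 u q • D2.flip (0, 1)))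
        - f (u q) • fderiv ℝ u q) q := hhalf.sub hFu
  have hgf : fderiv ℝ (fun z => -((pd1 u z) ^ 2 + (pd2 u z) ^ 2) / 2 - primF f (u z)) q =
      (2:ℝ)⁻¹ • -(pd1 u q • D2.flip (1, 0) + pd1 u q • D2.flip (1, 0)
        + (pd2 u q • D2.flip (0, 1) + pd2 u q • D2.flip (0, 1)))
        - f (u q) • fderiv ℝ u q := hg.fderiv
  have hBn : fderiv ℝ (fun z => -(pd2 u z)) q = -(D2.flip (0, 1)) := hB.neg.fderiv
  have hAf : fderiv ℝ (fun z => pd1 u z) q = D2.flip (1, 0) := hA.fderiv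
  have hUq1 : fderiv ℝ u q (1, 0) = pd1 u q := rfl
  have hUq2 : fderiv ℝ u q (0, 1) = pd2 u q := rfl
  have E1 : pd1 (fun z => -(pd2 u z)) q = -(D2 (1, 0) (0, 1)) := by
    show fderiv ℝ (fun z => -(pd2 u z)) q (1, 0) = _
    rw [hBn]; simp
  have E2 : pd2 (fun z => -(pd2 u z)) q = -(D2 (0, 1) (0, 1)) := by
    show fderiv ℝ (fun z => -(pd2 u z)) q (0, 1) = _
    rw [hBn]; simp
  have E3 : pd1 (fun z => pd1 u z) q = D2 (1, 0) (1, 0) := by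
    show fderiv ℝ (fun z => pd1 u z) q (1, 0) = _
    rw [hAf]; simp
  have E4 : pd2 (fun z => pd1 u z) q = D2 (0, 1) (1, 0) := by
    show fderiv ℝ (fun z => pd1 u z) q (0, 1) = _
    rw [hAf]; simp
  have E5 : pd1 (fun z => -((pd1 u z) ^ 2 + (pd2 u z) ^ 2) / 2 - primF f (u z)) q =
      (2:ℝ)⁻¹ * -(pd1 u q * D2 (1, 0) (1, 0) + pd1 u q * D2 (1, 0) (1, 0)
        + (pd2 u q * D2 (1, 0) (0, 1) + pd2 u q * D2 (1, 0) (0, 1)))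
        - f (u q) * pd1 u q := by
    show fderiv ℝ (fun z => -((pd1 u z) ^ 2 + (pd2 u z) ^ 2) / 2 - primF f (u z)) q (1, 0) = _
    rw [hgf]
    simp [hUq1, smul_eq_mul]; ring
  have E6 : pd2 (fun z => -((pd1 u z) ^ 2 + (pd2 u z) ^ 2) / 2 - primF f (u z)) q =
      (2:ℝ)⁻¹ * -(pd1 u q * D2 (0, 1) (1, 0) + pd1 u q * D2 (0, 1) (1, 0)
        + (pd2 u q * D2 (0, 1) (0, 1) + pd2 u q * D2 (0, 1) (0, 1)))
        - f (u q) * pd2 u q := by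
    show fderiv ℝ (fun z => -((pd1 u z) ^ 2 + (pd2 u z) ^ 2) / 2 - primF f (u z)) q (0, 1) = _
    rw [hgf]
    simp [hUq2, smul_eq_mul]; ring
  refine ⟨?_, ?_, ?_⟩
  · rw [E1, E4, hsymm (1, 0) (0, 1)]; ring
  · rw [E1, E2, E5, ← hpde]; ring
  · rw [E3, E4, E6, ← hpde]; ring
end
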